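/- arXiv:1806.06255 — 2 statements merged into one kernel-verified Lean document; each statement's English description precedes it below -/
import Mathlib

section
/- Let n = 2m+1 be odd and let τ be a 3-form on ℝⁿ. Then τ is a vector cross product if and only if for every unit vector X ∈ ℝⁿ one has τ_X² = −id + X⊗X, i.e. the kernel of τ_X is spanned by X and the restriction of τ_X to X^⊥ is a complex structure on X^⊥. -/
open scoped RealInnerProductSpace

noncomputable section

/-- Euclidean space `ℝⁿ`. -/
abbrev Euc (n : ℕ) : Type := EuclideanSpace ℝ (Fin n)

/-- The skew-symmetric endomorphism `τ_X` of `ℝⁿ` associated to a 3-form `τ` and a vector `X`,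
characterized by `⟪τ_X Y, Z⟫ = τ (X, Y, Z)`. -/
noncomputable def contr3 {n : ℕ} (τ : AlternatingMap ℝ (Euc n) ℝ (Fin 3)) (X : Euc n) :
    Euc n →ₗ[ℝ] Euc n where
  toFun Y := ∑ i : Fin n,
    ((τ.curryLeft X).curryLeft Y ![EuclideanSpace.single i 1]) • EuclideanSpace.single i (1 : ℝ)
  map_add' Y₁ Y₂ := by
    simp [map_add, add_smul, Finset.sum_add_distrib]
  map_smul' c Y := by
    simp [map_smul, smul_smul, Finset.smul_sum]

/-- `τ` is a vector cross product: `‖τ_X Y‖² = ‖X‖²‖Y‖² − ⟪X,Y⟫²`. -/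
def IsVCP {n : ℕ} (τ : AlternatingMap ℝ (Euc n) ℝ (Fin 3)) : Prop :=
  ∀ X Y : Euc n, ‖contr3 τ X Y‖ ^ 2 = ‖X‖ ^ 2 * ‖Y‖ ^ 2 - ⟪X, Y⟫ ^ 2

/-- `σ` is a generalized vector cross product: there is a nonzero skew-symmetric endomorphism `A`
such that for every unit vector `X`, `σ_X` is orthogonally conjugate to `A`. -/
def IsGVCP {n : ℕ} (σ : AlternatingMap ℝ (Euc n) ℝ (Fin 3)) : Prop :=
  ∃ A : Euc n →ₗ[ℝ] Euc n, A ≠ 0 ∧ (∀ X Y : Euc n, ⟪A X, Y⟫ = -⟪X, A Y⟫) ∧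
    ∀ X : Euc n, ‖X‖ = 1 → ∃ u : Euc n ≃ₗᵢ[ℝ] Euc n,
      ∀ Y : Euc n, contr3 σ X Y = u (A (u.symm Y))

/-- The endomorphism `U ⊗ V : X ↦ ⟪X, V⟫ U`. -/
noncomputable def tens {n : ℕ} (U V : Euc n) : Euc n →ₗ[ℝ] Euc n where
  toFun X := ⟪X, V⟫ • U
  map_add' X₁ X₂ := by (try simp only []); rw [inner_add_left, add_smul]
  map_smul' c X := by simp only [RingHom.id_apply]; rw [real_inner_smul_left, mul_smul]

/-- The `i`-th coordinate, as a linear functional on `ℝⁿ`. -/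
noncomputable def coordL {n : ℕ} (i : Fin n) : Euc n →ₗ[ℝ] ℝ where
  toFun x := x i
  map_add' _ _ := rfl
  map_smul' _ _ := rfl

/-- The elementary 3-form `eᵢ ∧ eⱼ ∧ e_k` on `ℝⁿ`. -/
noncomputable def elem3 {n : ℕ} (i j k : Fin n) : AlternatingMap ℝ (Euc n) ℝ (Fin 3) :=
  (Matrix.detRowAlternating : AlternatingMap ℝ (Fin 3 → ℝ) ℝ (Fin 3)).compLinearMap
    (LinearMap.pi (fun s : Fin 3 => coordL (![i, j, k] s)))

/-- The action of an orthogonal transformation `α` on 3-forms: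
`(α · τ)(X,Y,Z) = τ(α⁻¹X, α⁻¹Y, α⁻¹Z)`. -/
noncomputable def oAct {n : ℕ} (α : Euc n ≃ₗᵢ[ℝ] Euc n)
    (τ : AlternatingMap ℝ (Euc n) ℝ (Fin 3)) : AlternatingMap ℝ (Euc n) ℝ (Fin 3) :=
  τ.compLinearMap α.symm.toLinearEquiv.toLinearMap

/-- The volume form `e₁ ∧ e₂ ∧ e₃` (in any `ℝⁿ` with `n ≥ 3`). -/
noncomputable def vol3Gen {n : ℕ} (h : 3 ≤ n) : AlternatingMap ℝ (Euc n) ℝ (Fin 3) :=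
  elem3 ⟨0, by omega⟩ ⟨1, by omega⟩ ⟨2, by omega⟩

/-- The fundamental `G₂` 3-form
`τ₀ = e₁∧e₂∧e₇ + e₃∧e₄∧e₇ + e₅∧e₆∧e₇ + e₁∧e₃∧e₅ − e₁∧e₄∧e₆ − e₂∧e₃∧e₆ − e₂∧e₄∧e₅`
(with 1-indexed basis vectors, stated in any `ℝⁿ` with `n ≥ 7`). -/
noncomputable def tau0Gen {n : ℕ} (h : 7 ≤ n) : AlternatingMap ℝ (Euc n) ℝ (Fin 3) :=
  elem3 ⟨0, by omega⟩ ⟨1, by omega⟩ ⟨6, by omega⟩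
  + elem3 ⟨2, by omega⟩ ⟨3, by omega⟩ ⟨6, by omega⟩
  + elem3 ⟨4, by omega⟩ ⟨5, by omega⟩ ⟨6, by omega⟩
  + elem3 ⟨0, by omega⟩ ⟨2, by omega⟩ ⟨4, by omega⟩
  - elem3 ⟨0, by omega⟩ ⟨3, by omega⟩ ⟨5, by omega⟩
  - elem3 ⟨1, by omega⟩ ⟨2, by omega⟩ ⟨5, by omega⟩
  - elem3 ⟨1, by omega⟩ ⟨3, by omega⟩ ⟨4, by omega⟩

/-- The `SU(3)` 3-form `σ₀ = e₁∧e₃∧e₅ − e₁∧e₄∧e₆ − e₂∧e₃∧e₆ − e₂∧e₄∧e₅`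
(with 1-indexed basis vectors, stated in any `ℝⁿ` with `n ≥ 6`). -/
noncomputable def sigma0Gen {n : ℕ} (h : 6 ≤ n) : AlternatingMap ℝ (Euc n) ℝ (Fin 3) :=
  elem3 ⟨0, by omega⟩ ⟨2, by omega⟩ ⟨4, by omega⟩
  - elem3 ⟨0, by omega⟩ ⟨3, by omega⟩ ⟨5, by omega⟩
  - elem3 ⟨1, by omega⟩ ⟨2, by omega⟩ ⟨5, by omega⟩
  - elem3 ⟨1, by omega⟩ ⟨3, by omega⟩ ⟨4, by omega⟩

end

/-! `τ_X` is skew-adjoint, so `τ_X²` is symmetric with quadratic form `Y ↦ -‖τ_X Y‖²`. A symmetric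
endomorphism is determined by its quadratic form, hence for a unit vector `X` the identity
`τ_X² = -id + X ⊗ X` says exactly that `‖τ_X Y‖² = ‖Y‖² - ⟪X, Y⟫²` for all `Y`. Both sides of the
vector cross product identity are homogeneous of degree 2 in `X`, so unit vectors `X` suffice. -/

section SkewSquare

variable {E : Type*} [NormedAddCommGroup E] [InnerProductSpace ℝ E] {A : E →ₗ[ℝ] E}

theorem isSymmetric_comp_self_of_skew (hA : ∀ x y, ⟪A x, y⟫ = -⟪x, A y⟫) :
    (A ∘ₗ A).IsSymmetric := fun x y => by
  rw [LinearMap.comp_apply, LinearMap.comp_apply, hA, hA, neg_neg]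

theorem norm_sq_eq_neg_inner_comp_self (hA : ∀ x y, ⟪A x, y⟫ = -⟪x, A y⟫) (x : E) :
    ‖A x‖ ^ 2 = -⟪(A ∘ₗ A) x, x⟫ := by
  rw [← real_inner_self_eq_norm_sq, hA, real_inner_comm, LinearMap.comp_apply]

theorem comp_self_eq_iff_of_skew (hA : ∀ x y, ⟪A x, y⟫ = -⟪x, A y⟫) {T : E →ₗ[ℝ] E}
    (hT : T.IsSymmetric) : A ∘ₗ A = T ↔ ∀ x, ‖A x‖ ^ 2 = -⟪T x, x⟫ := by
  rw [← sub_eq_zero, ← ((isSymmetric_comp_self_of_skew hA).sub hT).inner_map_self_eq_zero]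
  refine forall_congr' fun x => ?_
  rw [LinearMap.sub_apply, inner_sub_left, norm_sq_eq_neg_inner_comp_self hA, sub_eq_zero]
  constructor <;> intro h <;> linarith

end SkewSquare

section Tensor

variable {n : ℕ}

theorem isSymmetric_neg_id_add_tens_self (X : Euc n) :
    (-LinearMap.id + tens X X).IsSymmetric := fun Y Z => by
  simp only [tens, LinearMap.add_apply, LinearMap.neg_apply, LinearMap.id_apply, LinearMap.coe_mk,
    AddHom.coe_mk, inner_add_left, inner_add_right, inner_neg_left, inner_neg_right,
    real_inner_smul_left, real_inner_smul_right, real_inner_comm X]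
  ring

theorem inner_neg_id_add_tens_self (X Y : Euc n) :
    ⟪(-LinearMap.id + tens X X : Euc n →ₗ[ℝ] Euc n) Y, Y⟫ = ⟪X, Y⟫ ^ 2 - ‖Y‖ ^ 2 := by
  simp only [tens, LinearMap.add_apply, LinearMap.neg_apply, LinearMap.id_apply, LinearMap.coe_mk,
    AddHom.coe_mk, inner_add_left, inner_neg_left, real_inner_smul_left, real_inner_self_eq_norm_sq,
    real_inner_comm X]
  ring

end Tensor

section Contraction

variable {n : ℕ} (τ : AlternatingMap ℝ (Euc n) ℝ (Fin 3))

theorem inner_contr3 (X Y Z : Euc n) : ⟪contr3 τ X Y, Z⟫ = τ ![X, Y, Z] := by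
  let ℓ : Euc n →ₗ[ℝ] ℝ := τ.toMultilinearMap.toLinearMap ![X, Y, 0] 2
  have hℓ : ∀ W, ℓ W = τ ![X, Y, W] := fun W => by
    simp only [ℓ, MultilinearMap.toLinearMap_apply, AlternatingMap.coe_multilinearMap]
    congr 1
    funext i
    fin_cases i <;> rfl
  let b := EuclideanSpace.basisFun (Fin n) ℝ
  calc ⟪contr3 τ X Y, Z⟫ = ∑ i, ℓ (b i) * ⟪b i, Z⟫ := by
        simp [contr3, sum_inner, real_inner_smul_left, hℓ, b]
    _ = ℓ (∑ i, ⟪b i, Z⟫ • b i) := by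
        simp only [map_sum, map_smul, smul_eq_mul, mul_comm]
    _ = τ ![X, Y, Z] := by rw [b.sum_repr', hℓ]

theorem inner_contr3_skew (X Y Z : Euc n) : ⟪contr3 τ X Y, Z⟫ = -⟪Y, contr3 τ X Z⟫ := by
  rw [inner_contr3, real_inner_comm, inner_contr3]
  have h := τ.map_swap ![X, Z, Y] (show (1 : Fin 3) ≠ 2 by decide)
  convert h using 2
  ext i
  fin_cases i <;> rfl

theorem contr3_smul (c : ℝ) (X : Euc n) : contr3 τ (c • X) = c • contr3 τ X := by
  ext Y : 1
  simp [contr3, Finset.smul_sum, smul_smul]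

theorem contr3_comp_self_eq_iff (X : Euc n) :
    contr3 τ X ∘ₗ contr3 τ X = -LinearMap.id + tens X X ↔
      ∀ Y, ‖contr3 τ X Y‖ ^ 2 = ‖Y‖ ^ 2 - ⟪X, Y⟫ ^ 2 := by
  rw [comp_self_eq_iff_of_skew (inner_contr3_skew τ X) (isSymmetric_neg_id_add_tens_self X)]
  simp only [inner_neg_id_add_tens_self, neg_sub]

theorem isVCP_iff_forall_norm_eq_one : IsVCP τ ↔ ∀ X : Euc n, ‖X‖ = 1 →
    ∀ Y, ‖contr3 τ X Y‖ ^ 2 = ‖Y‖ ^ 2 - ⟪X, Y⟫ ^ 2 := by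
  refine ⟨fun h X hX Y => by simpa [hX] using h X Y, fun h X Y => ?_⟩
  rcases eq_or_ne X 0 with rfl | hX
  · have h0 : contr3 τ 0 = 0 := by simpa using contr3_smul τ 0 0
    simp [h0]
  obtain ⟨r, u, hu, rfl⟩ : ∃ (r : ℝ) (u : Euc n), ‖u‖ = 1 ∧ X = r • u :=
    ⟨‖X‖, ‖X‖⁻¹ • X, norm_smul_inv_norm hX, by simp [smul_smul, hX]⟩
  simp only [contr3_smul, LinearMap.smul_apply, norm_smul, hu, real_inner_smul_left, mul_pow,
    h u hu, Real.norm_eq_abs, sq_abs]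
  ring

end Contraction

/-- Let `n = 2m+1` be odd and let `τ` be a 3-form on `ℝⁿ`. Then `τ` is a vector
cross product if and only if for every unit vector `X ∈ ℝⁿ` one has `τ_X² = −id + X⊗X`. -/
theorem statement2 {m : ℕ} (τ : AlternatingMap ℝ (Euc (2 * m + 1)) ℝ (Fin 3)) :
    IsVCP τ ↔ ∀ X : Euc (2 * m + 1), ‖X‖ = 1 →
      contr3 τ X ∘ₗ contr3 τ X = -LinearMap.id + tens X X := by
  simp only [isVCP_iff_forall_norm_eq_one, contr3_comp_self_eq_iff]
end

section
/- Let A and B be skew-symmetric endomorphisms of an n-dimensional real inner product space such that tr(A^{2k}) = tr(B^{2k}) for every integer k ≥ 1. Then A and B are orthogonally conjugate, i.e. there exists an orthogonal transformation u with B = u ∘ A ∘ u⁻¹. -/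
/-!
For skew-symmetric `A` the operator `-A²` is positive, with `⟪-A² x, x⟫ = ‖A x‖²`, and
`tr (A^{2k}) = (-1)^k tr ((-A²)^k)`. Hence the eigenvalues `λᵢ, κᵢ ≥ 0` of `-A²` and `-B²` satisfy
`∑ λᵢᵏ = ∑ κᵢᵏ` for all `k ≥ 1`, and letting `k → ∞` shows that the largest ones agree, say `μ`.
If `μ = 0` then `A = B = 0`. Otherwise a unit eigenvector `e` of `-A²` for `μ` and `A e / √μ` span
an `A`-invariant plane on which `A` has matrix `[[0, -√μ], [√μ, 0]]`, and likewise for `B`. The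
orthogonal complements are invariant as well and the restrictions to them still have equal traces
of even powers, so induction on the dimension conjugates them; the two isometries glue along the
orthogonal decompositions.
-/

open scoped RealInnerProductSpace

open Module Submodule Set Filter

section

variable {E F : Type*} [NormedAddCommGroup E] [InnerProductSpace ℝ E]
  [NormedAddCommGroup F] [InnerProductSpace ℝ F]

theorem le_of_forall_sum_pow_eq {ι κ : Type*} [Fintype ι] [Fintype κ] {a : ι → ℝ} {b : κ → ℝ}
    (ha : ∀ i, 0 ≤ a i) (hb : ∀ j, 0 ≤ b j) (h : ∀ k, 1 ≤ k → ∑ i, a i ^ k = ∑ j, b j ^ k)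
    {M : ℝ} (hM : 0 ≤ M) (hbM : ∀ j, b j ≤ M) (i : ι) : a i ≤ M := by
  by_contra! hlt
  have hai : 0 < a i := hM.trans_lt hlt
  have hbound : ∀ k, 1 ≤ k → 1 ≤ Fintype.card κ * (M / a i) ^ k := fun k hk => by
    rw [div_pow, mul_div_assoc', le_div_iff₀ (pow_pos hai k), one_mul]
    calc a i ^ k ≤ ∑ i, a i ^ k :=
          Finset.single_le_sum (fun i _ => pow_nonneg (ha i) k) (Finset.mem_univ i)
      _ = ∑ j, b j ^ k := h k hk
      _ ≤ ∑ _j : κ, M ^ k := Finset.sum_le_sum fun j _ => pow_le_pow_left₀ (hb j) (hbM j) k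
      _ = Fintype.card κ * M ^ k := by simp
  have hlim : Tendsto (fun k => Fintype.card κ * (M / a i) ^ k) atTop (nhds 0) := by
    simpa using (tendsto_pow_atTop_nhds_zero_of_lt_one (div_nonneg hM hai.le)
      ((div_lt_one hai).2 hlt)).const_mul (Fintype.card κ : ℝ)
  obtain ⟨k, hk1, hk⟩ :=
    ((eventually_ge_atTop 1).and (hlim.eventually (gt_mem_nhds one_pos))).exists
  linarith [hbound k hk1]

theorem Module.End.mapsTo_span_pair {R M : Type*} [Field R] [AddCommGroup M] [Module R M]
    {f : Module.End R M} {e : M} {c t : R} (ht : t ≠ 0) (hf : (f ^ 2) e = c • e) :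
    ∀ x ∈ span R (range ![e, t • f e]), f x ∈ span R (range ![e, t • f e]) := by
  have hmem : ∀ i, ![e, t • f e] i ∈ span R (range ![e, t • f e]) :=
    fun i => subset_span (mem_range_self i)
  intro x hx
  refine (map_span_le f _ _).2 ?_ (mem_map_of_mem hx)
  rintro _ ⟨i, rfl⟩
  fin_cases i
  · show f e ∈ _
    simpa [smul_smul, ht] using smul_mem _ t⁻¹ (hmem 1)
  · show f (t • f e) ∈ _
    rw [map_smul, ← Module.End.mul_apply, ← pow_two, hf, smul_smul]
    exact smul_mem _ _ (hmem 0)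

theorem LinearMap.trace_neg_sq_pow {R M : Type*} [CommRing R] [AddCommGroup M] [Module R M]
    (A : Module.End R M) (k : ℕ) :
    trace R M ((-(A ^ 2)) ^ k) = (-1) ^ k * trace R M (A ^ (2 * k)) := by
  rcases Nat.even_or_odd k with hk | hk <;> simp [hk.neg_pow, pow_mul]

theorem LinearMap.trace_eq_trace_restrict_add_trace_restrict_orthogonal [FiniteDimensional ℝ E]
    (f : E →ₗ[ℝ] E) {P : Submodule ℝ E} (hP : ∀ x ∈ P, f x ∈ P) (hP' : ∀ x ∈ Pᗮ, f x ∈ Pᗮ) :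
    trace ℝ E f = trace ℝ P (f.restrict hP) + trace ℝ Pᗮ (f.restrict hP') := by
  have hint : DirectSum.IsInternal ![P, Pᗮ] :=
    (DirectSum.isInternal_submodule_iff_isCompl _ zero_ne_one (by ext i; fin_cases i <;> simp)).2
      P.isCompl_orthogonal
  rw [trace_eq_sum_trace_restrict hint (f := f) (fun i => by fin_cases i <;> assumption),
    Fin.sum_univ_two]
  rfl

theorem LinearMap.trace_pow_eq_trace_restrict_pow_add_orthogonal [FiniteDimensional ℝ E]
    (f : E →ₗ[ℝ] E) {P : Submodule ℝ E} (hP : ∀ x ∈ P, f x ∈ P) (hP' : ∀ x ∈ Pᗮ, f x ∈ Pᗮ)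
    (k : ℕ) :
    trace ℝ E (f ^ k) = trace ℝ P (f.restrict hP ^ k) + trace ℝ Pᗮ (f.restrict hP' ^ k) := by
  rw [Module.End.pow_restrict, Module.End.pow_restrict]
  exact trace_eq_trace_restrict_add_trace_restrict_orthogonal _ _ _

theorem LinearMap.IsSymmetric.trace_pow_eq_sum_eigenvalues_pow [FiniteDimensional ℝ E]
    {S : E →ₗ[ℝ] E} (hS : S.IsSymmetric) {n : ℕ} (hn : finrank ℝ E = n) (k : ℕ) :
    trace ℝ E (S ^ k) = ∑ i, hS.eigenvalues hn i ^ k := by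
  rw [trace_eq_sum_inner _ (hS.eigenvectorBasis hn)]
  refine Finset.sum_congr rfl fun i _ => ?_
  rw [(hS.hasEigenvector_eigenvectorBasis hn i).pow_apply k, real_inner_smul_right,
    real_inner_self_eq_norm_sq, OrthonormalBasis.norm_eq_one]
  simp

theorem LinearMap.IsPositive.exists_eigenvector_of_trace_pow_eq [FiniteDimensional ℝ E]
    [FiniteDimensional ℝ F] {S : E →ₗ[ℝ] E} {T : F →ₗ[ℝ] F} (hS : S.IsPositive) (hT : T.IsPositive)
    {n : ℕ} (hE : finrank ℝ E = n) (hF : finrank ℝ F = n)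
    (htr : ∀ k, 1 ≤ k → trace ℝ E (S ^ k) = trace ℝ F (T ^ k)) (hS0 : S ≠ 0) :
    ∃ μ : ℝ, 0 < μ ∧ ∃ e f, ‖e‖ = 1 ∧ ‖f‖ = 1 ∧ S e = μ • e ∧ T f = μ • f := by
  set b := hS.isSymmetric.eigenvectorBasis hE
  set c := hT.isSymmetric.eigenvectorBasis hF
  set a := hS.isSymmetric.eigenvalues hE
  set a' := hT.isSymmetric.eigenvalues hF
  have ha := hS.nonneg_eigenvalues hE
  have ha' := hT.nonneg_eigenvalues hF
  have hsum : ∀ k, 1 ≤ k → ∑ i, a i ^ k = ∑ i, a' i ^ k := fun k hk => by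
    rw [← hS.isSymmetric.trace_pow_eq_sum_eigenvalues_pow,
      ← hT.isSymmetric.trace_pow_eq_sum_eigenvalues_pow, htr k hk]
  have hn : 0 < n := by
    obtain ⟨x, hx⟩ := DFunLike.ne_iff.1 hS0
    have : Nontrivial E := ⟨⟨x, 0, fun h => hx (by simp [h])⟩⟩
    exact hE ▸ finrank_pos
  -- the eigenvalues are sorted in decreasing order
  set i₀ : Fin n := ⟨0, hn⟩
  have ha_max : ∀ i, a i ≤ a i₀ :=
    fun i => hS.isSymmetric.eigenvalues_antitone hE (Nat.zero_le i.1)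
  have ha'_max : ∀ i, a' i ≤ a' i₀ :=
    fun i => hT.isSymmetric.eigenvalues_antitone hF (Nat.zero_le i.1)
  have hpos : 0 < a i₀ := by
    refine (ha i₀).lt_of_ne fun h => hS0 (b.toBasis.ext fun i => ?_)
    have : a i = 0 := le_antisymm (h ▸ ha_max i) (ha i)
    simpa [b] using Or.inl this
  have heq : a i₀ = a' i₀ :=
    le_antisymm (le_of_forall_sum_pow_eq ha ha' hsum (ha' i₀) ha'_max i₀)
      (le_of_forall_sum_pow_eq ha' ha (fun k hk => (hsum k hk).symm) (ha i₀) ha_max i₀)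
  refine ⟨a i₀, hpos, b i₀, c i₀, b.norm_eq_one i₀, c.norm_eq_one i₀, ?_, ?_⟩
  · simp [b, a]
  · simp [c, heq, a']

theorem Orthonormal.exists_orthonormalBasis_span {ι : Type*} [Fintype ι] {v : ι → E}
    (hv : Orthonormal ℝ v) :
    ∃ b : OrthonormalBasis ι ℝ (span ℝ (range v)), ∀ i, (b i : E) = v i := by
  refine ⟨(Basis.span hv.linearIndependent).toOrthonormalBasis ?_, fun i => by
    rw [Basis.coe_toOrthonormalBasis, Basis.span_apply]⟩
  convert! orthonormal_span hv
  rw [Basis.span_apply]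

namespace LinearMap

def IsSkewSymmetric (A : E →ₗ[ℝ] E) : Prop :=
  ∀ x y, ⟪A x, y⟫ = -⟪x, A y⟫

def OrthogonallyConjugate (A : E →ₗ[ℝ] E) (B : F →ₗ[ℝ] F) : Prop :=
  ∃ u : E ≃ₗᵢ[ℝ] F, ∀ x, B (u x) = u (A x)

namespace OrthogonallyConjugate

variable {A : E →ₗ[ℝ] E} {B : F →ₗ[ℝ] F}

theorem pow (h : OrthogonallyConjugate A B) (k : ℕ) :
    OrthogonallyConjugate (A ^ k) (B ^ k) := by
  obtain ⟨u, hu⟩ := h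
  refine ⟨u, fun x => ?_⟩
  induction k generalizing x with
  | zero => rfl
  | succ k ih => rw [pow_succ, Module.End.mul_apply, hu, ih, pow_succ, Module.End.mul_apply]

theorem trace_eq [FiniteDimensional ℝ E] (h : OrthogonallyConjugate A B) :
    trace ℝ E A = trace ℝ F B := by
  obtain ⟨u, hu⟩ := h
  have : B = u.toLinearEquiv.conj A := ext fun y => by simpa using hu (u.symm y)
  rw [this, trace_conj']

theorem of_orthonormalBasis {ι : Type*} [Fintype ι] (b : OrthonormalBasis ι ℝ E)
    (c : OrthonormalBasis ι ℝ F) (h : ∀ i j, ⟪A (b i), b j⟫ = ⟪B (c i), c j⟫) :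
    OrthogonallyConjugate A B := by
  set u := b.equiv c (Equiv.refl ι)
  have hu : ∀ i, u (b i) = c i := fun i => by simp [u]
  have key : ∀ i, B (u (b i)) = u (A (b i)) := fun i => by
    refine InnerProductSpace.ext_inner_right_basis c.toBasis fun j => ?_
    rw [OrthonormalBasis.coe_toBasis, ← hu j, u.inner_map_map, hu, hu, h]
  have := b.toBasis.ext (f₁ := B ∘ₗ u.toLinearEquiv.toLinearMap)
    (f₂ := u.toLinearEquiv.toLinearMap ∘ₗ A) (by simpa using key)
  exact ⟨u, fun x => by simpa using congr($this x)⟩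

theorem zero [FiniteDimensional ℝ E] [FiniteDimensional ℝ F] (h : finrank ℝ E = finrank ℝ F) :
    OrthogonallyConjugate (0 : E →ₗ[ℝ] E) (0 : F →ₗ[ℝ] F) :=
  of_orthonormalBasis ((stdOrthonormalBasis ℝ E).reindex (finCongr h)) (stdOrthonormalBasis ℝ F)
    fun _ _ => by simp

theorem restrict_span {ι : Type*} [Fintype ι] {v : ι → E} {w : ι → F}
    (hv : Orthonormal ℝ v) (hw : Orthonormal ℝ w)
    (hA : ∀ x ∈ span ℝ (Set.range v), A x ∈ span ℝ (Set.range v))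
    (hB : ∀ x ∈ span ℝ (Set.range w), B x ∈ span ℝ (Set.range w))
    (h : ∀ i j, ⟪A (v i), v j⟫ = ⟪B (w i), w j⟫) :
    OrthogonallyConjugate (A.restrict hA) (B.restrict hB) := by
  obtain ⟨b, hb⟩ := hv.exists_orthonormalBasis_span
  obtain ⟨c, hc⟩ := hw.exists_orthonormalBasis_span
  refine of_orthonormalBasis b c fun i j => ?_
  simpa [Submodule.coe_inner, hb, hc] using h i j

theorem of_orthogonal [FiniteDimensional ℝ E] [FiniteDimensional ℝ F]
    {P : Submodule ℝ E} {Q : Submodule ℝ F} {hP : ∀ x ∈ P, A x ∈ P} {hQ : ∀ x ∈ Q, B x ∈ Q}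
    (hP' : ∀ x ∈ Pᗮ, A x ∈ Pᗮ) (hQ' : ∀ x ∈ Qᗮ, B x ∈ Qᗮ)
    (h : OrthogonallyConjugate (A.restrict hP) (B.restrict hQ))
    (h' : OrthogonallyConjugate (A.restrict hP') (B.restrict hQ')) :
    OrthogonallyConjugate A B := by
  obtain ⟨u, hu⟩ := h
  obtain ⟨u', hu'⟩ := h'
  let φ : E ≃ₗᵢ[ℝ] F := P.orthogonalDecomposition.trans
    ((u.withLpProdCongr 2 u').trans Q.orthogonalDecomposition.symm)
  have hφ : ∀ x : P, φ x = u x := fun x => by simp [φ]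
  have hφ' : ∀ x : Pᗮ, φ x = u' x := fun x => by simp [φ]
  have key : ∀ y : P, B (φ y) = φ (A y) := fun y => by
    rw [hφ, ← coe_restrict_apply hP y, hφ]
    exact congrArg Subtype.val (hu y)
  have key' : ∀ y : Pᗮ, B (φ y) = φ (A y) := fun y => by
    rw [hφ', ← coe_restrict_apply hP' y, hφ']
    exact congrArg Subtype.val (hu' y)
  refine ⟨φ, fun x => ?_⟩
  obtain ⟨p, hp, q, hq, rfl⟩ := P.exists_add_mem_mem_orthogonal x
  simp only [map_add, key ⟨p, hp⟩, key' ⟨q, hq⟩]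

end OrthogonallyConjugate

namespace IsSkewSymmetric

variable {A : E →ₗ[ℝ] E} {B : F →ₗ[ℝ] F}

theorem inner_apply_self (hA : A.IsSkewSymmetric) (x : E) : ⟪A x, x⟫ = 0 := by
  linarith [hA x x, real_inner_comm x (A x)]

theorem inner_neg_sq_apply (hA : A.IsSkewSymmetric) (x y : E) :
    ⟪(-(A ^ 2)) x, y⟫ = ⟪A x, A y⟫ := by
  rw [neg_apply, pow_two, Module.End.mul_apply, inner_neg_left, hA, neg_neg]

theorem isPositive_neg_sq (hA : A.IsSkewSymmetric) : (-(A ^ 2)).IsPositive := by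
  refine (isPositive_iff _).2 ⟨fun x y => ?_, fun x => ?_⟩
  · rw [← real_inner_comm x, hA.inner_neg_sq_apply, hA.inner_neg_sq_apply, real_inner_comm]
  · rw [hA.inner_neg_sq_apply]
    exact real_inner_self_nonneg

theorem neg_sq_eq_zero_iff (hA : A.IsSkewSymmetric) : -(A ^ 2) = 0 ↔ A = 0 := by
  refine ⟨fun h => ext fun x => ?_, fun h => by simp [h]⟩
  rw [zero_apply, ← inner_self_eq_zero (𝕜 := ℝ), ← hA.inner_neg_sq_apply, h, zero_apply,
    inner_zero_left]

theorem norm_apply_sq (hA : A.IsSkewSymmetric) {e : E} {μ : ℝ} (he : ‖e‖ = 1)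
    (h : (-(A ^ 2)) e = μ • e) : ‖A e‖ ^ 2 = μ := by
  rw [← real_inner_self_eq_norm_sq, ← hA.inner_neg_sq_apply, h, real_inner_smul_left,
    real_inner_self_eq_norm_sq, he, one_pow, mul_one]

theorem mapsTo_orthogonal (hA : A.IsSkewSymmetric) {P : Submodule ℝ E}
    (hP : ∀ x ∈ P, A x ∈ P) : ∀ x ∈ Pᗮ, A x ∈ Pᗮ := fun x hx y hy => by
  rw [real_inner_comm, hA, real_inner_comm, hx _ (hP y hy), neg_zero]

theorem restrict (hA : A.IsSkewSymmetric) {P : Submodule ℝ E} (hP : ∀ x ∈ P, A x ∈ P) :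
    (A.restrict hP).IsSkewSymmetric :=
  fun x y => hA x y

theorem orthonormal_pair (hA : A.IsSkewSymmetric) {e : E} (he : ‖e‖ = 1) (hAe : A e ≠ 0) :
    Orthonormal ℝ ![e, ‖A e‖⁻¹ • A e] := by
  have hAe' : ‖A e‖ ≠ 0 := norm_ne_zero_iff.2 hAe
  rw [orthonormal_iff_ite]
  intro i j
  fin_cases i <;> fin_cases j <;>
    simp [real_inner_smul_left, real_inner_smul_right, he, norm_smul, hAe',
      hA.inner_apply_self, real_inner_comm (A e) e]

theorem inner_apply_pair (hA : A.IsSkewSymmetric) (e : E) (i j : Fin 2) :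
    ⟪A (![e, ‖A e‖⁻¹ • A e] i), ![e, ‖A e‖⁻¹ • A e] j⟫ = ![![0, ‖A e‖], ![-‖A e‖, 0]] i j := by
  fin_cases i <;> fin_cases j <;>
    simp [real_inner_smul_left, real_inner_smul_right, hA.inner_apply_self, hA (A e) e,
      pow_two, ← mul_assoc, inv_mul_mul_self]

theorem exists_orthogonallyConjugate_restrict_plane (hA : A.IsSkewSymmetric)
    (hB : B.IsSkewSymmetric) {μ : ℝ} (hμ : 0 < μ) {e : E} {f : F} (he : ‖e‖ = 1) (hf : ‖f‖ = 1)
    (hAe : (-(A ^ 2)) e = μ • e) (hBf : (-(B ^ 2)) f = μ • f) :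
    ∃ (P : Submodule ℝ E) (Q : Submodule ℝ F) (hP : ∀ x ∈ P, A x ∈ P) (hQ : ∀ x ∈ Q, B x ∈ Q),
      finrank ℝ P = 2 ∧ finrank ℝ Q = 2 ∧
        OrthogonallyConjugate (A.restrict hP) (B.restrict hQ) := by
  have hnA := hA.norm_apply_sq he hAe
  have hnB := hB.norm_apply_sq hf hBf
  have hAe0 : A e ≠ 0 := fun h => by simp [h] at hnA; linarith
  have hBf0 : B f ≠ 0 := fun h => by simp [h] at hnB; linarith
  have hv := hA.orthonormal_pair he hAe0
  have hw := hB.orthonormal_pair hf hBf0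
  have hP := Module.End.mapsTo_span_pair (inv_ne_zero (norm_ne_zero_iff.2 hAe0))
    (show (A ^ 2) e = (-μ) • e by rw [neg_smul, ← hAe, neg_apply, neg_neg])
  have hQ := Module.End.mapsTo_span_pair (inv_ne_zero (norm_ne_zero_iff.2 hBf0))
    (show (B ^ 2) f = (-μ) • f by rw [neg_smul, ← hBf, neg_apply, neg_neg])
  have hnorm : ‖A e‖ = ‖B f‖ := (sq_eq_sq₀ (norm_nonneg _) (norm_nonneg _)).1 (hnA.trans hnB.symm)
  refine ⟨_, _, hP, hQ, ?_, ?_, OrthogonallyConjugate.restrict_span hv hw hP hQ fun i j => ?_⟩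
  · simp [finrank_span_eq_card hv.linearIndependent]
  · simp [finrank_span_eq_card hw.linearIndependent]
  · rw [hA.inner_apply_pair, hB.inner_apply_pair, hnorm]

theorem orthogonallyConjugate_of_trace_pow_eq [FiniteDimensional ℝ E] [FiniteDimensional ℝ F]
    {n : ℕ} (hE : finrank ℝ E = n) (hF : finrank ℝ F = n) (hA : A.IsSkewSymmetric)
    (hB : B.IsSkewSymmetric)
    (htr : ∀ k, 1 ≤ k → trace ℝ E (A ^ (2 * k)) = trace ℝ F (B ^ (2 * k))) :
    OrthogonallyConjugate A B := by
  induction n using Nat.strong_induction_on generalizing E F with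
  | _ n ih =>
  have htrS : ∀ k, 1 ≤ k → trace ℝ E ((-(A ^ 2)) ^ k) = trace ℝ F ((-(B ^ 2)) ^ k) :=
    fun k hk => by rw [trace_neg_sq_pow, trace_neg_sq_pow, htr k hk]
  by_cases hA0 : A = 0
  · have hB0 : B = 0 := by
      by_contra hB0
      obtain ⟨μ, hμ, -, f, -, hf, -, hAf⟩ :=
        hB.isPositive_neg_sq.exists_eigenvector_of_trace_pow_eq hA.isPositive_neg_sq hF hE
          (fun k hk => (htrS k hk).symm) (hB.neg_sq_eq_zero_iff.not.2 hB0)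
      simp [hA0, eq_comm (a := (0 : E)), hμ.ne'] at hAf
      simp [hAf] at hf
    subst hA0 hB0
    exact OrthogonallyConjugate.zero (hE.trans hF.symm)
  obtain ⟨μ, hμ, e, f, he, hf, hAe, hBf⟩ :=
    hA.isPositive_neg_sq.exists_eigenvector_of_trace_pow_eq hB.isPositive_neg_sq hE hF htrS
      (hA.neg_sq_eq_zero_iff.not.2 hA0)
  obtain ⟨P, Q, hP, hQ, hPr, hQr, hPQ⟩ :=
    hA.exists_orthogonallyConjugate_restrict_plane hB hμ he hf hAe hBf
  have hP' := hA.mapsTo_orthogonal hP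
  have hQ' := hB.mapsTo_orthogonal hQ
  have hdimP := P.finrank_add_finrank_orthogonal
  have hdimQ := Q.finrank_add_finrank_orthogonal
  refine hPQ.of_orthogonal hP' hQ' (ih (n - 2) (by omega) (by omega) (by omega)
    (hA.restrict hP') (hB.restrict hQ') fun k hk => ?_)
  have hsplit := htr k hk
  rwa [trace_pow_eq_trace_restrict_pow_add_orthogonal _ hP hP',
    trace_pow_eq_trace_restrict_pow_add_orthogonal _ hQ hQ', (hPQ.pow (2 * k)).trace_eq,
    add_right_inj] at hsplit

end IsSkewSymmetric

end LinearMap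

end

theorem statement15_general {E : Type*} [NormedAddCommGroup E] [InnerProductSpace ℝ E]
    [FiniteDimensional ℝ E]
    (A B : E →ₗ[ℝ] E)
    (hA : ∀ X Y : E, ⟪A X, Y⟫ = -⟪X, A Y⟫)
    (hB : ∀ X Y : E, ⟪B X, Y⟫ = -⟪X, B Y⟫)
    (htr : ∀ k : ℕ, 1 ≤ k →
      LinearMap.trace ℝ E (A ^ (2 * k)) = LinearMap.trace ℝ E (B ^ (2 * k))) :
    ∃ u : E ≃ₗᵢ[ℝ] E, ∀ x : E, B x = u (A (u.symm x)) := by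
  obtain ⟨u, hu⟩ :=
    LinearMap.IsSkewSymmetric.orthogonallyConjugate_of_trace_pow_eq rfl rfl hA hB htr
  exact ⟨u, fun x => by simpa using hu (u.symm x)⟩

/-- Let `A` and `B` be skew-symmetric endomorphisms of an `n`-dimensional real
inner product space such that `tr(A^{2k}) = tr(B^{2k})` for every integer `k ≥ 1`. Then `A` and
`B` are orthogonally conjugate, i.e. there exists an orthogonal transformation `u` with
`B = u ∘ A ∘ u⁻¹`. -/
theorem statement15 {E : Type*} [NormedAddCommGroup E] [InnerProductSpace ℝ E]
    [FiniteDimensional ℝ E] (n : ℕ) (hn : Module.finrank ℝ E = n)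
    (A B : E →ₗ[ℝ] E)
    (hA : ∀ X Y : E, ⟪A X, Y⟫ = -⟪X, A Y⟫)
    (hB : ∀ X Y : E, ⟪B X, Y⟫ = -⟪X, B Y⟫)
    (htr : ∀ k : ℕ, 1 ≤ k →
      LinearMap.trace ℝ E (A ^ (2 * k)) = LinearMap.trace ℝ E (B ^ (2 * k))) :
    ∃ u : E ≃ₗᵢ[ℝ] E, ∀ x : E, B x = u (A (u.symm x)) :=
  statement15_general A B hA hB htr
end
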